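/- With ω, ∇, Ω, R̃ as in the context: b((ω)₀) = 0, and for every k ≥ 1, b((ω)_k) = ℏ ∇((ω)_{k−1}) + ℏ Σ_{j=1}^{k−1} (−1)^j · 1 ⊗ ω ⊗ ⋯ ⊗ (Ω − R̃) ⊗ ⋯ ⊗ ω, where Ω − R̃ occupies the j-th of the ω-slots, and ∇ acts on tensors by the graded Leibniz rule ∇(c₀ ⊗ ⋯ ⊗ c_m) = Σ_{i=0}^{m} (−1)^{deg c₀ + ⋯ + deg c_{i−1}} c₀ ⊗ ⋯ ⊗ ∇cᵢ ⊗ ⋯ ⊗ c_m. -/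

import Mathlib

noncomputable section

/-- `(-1)^z` (for `z : ℤ`) as an element of `K`. -/
def negOnePowK (K : Type*) [CommRing K] (z : ℤ) : K := ((Int.negOnePow z : ℤ) : K)

/-- merge slots `i` and `i+1` of a tuple, using the binary operation `op`
(used with `op = (*)` on algebra elements and with `op = (+)` on degrees). -/
def mergeW {α : Type*} (op : α → α → α) {N : ℕ} (v : Fin (N+1) → α) (i : Fin N) :
    Fin N → α := fun j =>
  if j.1 < i.1 then v ⟨j.1, by have := j.2; omega⟩
  else if j.1 = i.1 then op (v ⟨i.1, by have := i.2; omega⟩) (v ⟨i.1+1, by have := i.2; omega⟩)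
  else v ⟨j.1+1, by have := j.2; omega⟩

/-- the rotated tuple `(op v_N v₀, v₁, …, v_{N-1})`. -/
def rotW {α : Type*} (op : α → α → α) {N : ℕ} (v : Fin (N+1) → α) : Fin N → α := fun j =>
  if j.1 = 0 then op (v ⟨N, by omega⟩) (v ⟨0, by omega⟩)
  else v ⟨j.1, by have := j.2; omega⟩

/-- `(p,q)`-shuffles: permutations `σ` of `{0,…,p+q-1}` such that the positions of the
entries of the first block (values `< p`) occur in increasing order, and likewise for
the second block (values `≥ p`); position `i` of the shuffled word carries entry `σ(i)`. -/
def IsShuffle (p q : ℕ) (σ : Equiv.Perm (Fin (p+q))) : Prop :=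
  (∀ s t : Fin (p+q), s < t → t.1 < p → σ⁻¹ s < σ⁻¹ t) ∧
  (∀ s t : Fin (p+q), s < t → p ≤ s.1 → σ⁻¹ s < σ⁻¹ t)

noncomputable instance (p q : ℕ) (σ : Equiv.Perm (Fin (p+q))) : Decidable (IsShuffle p q σ) :=
  Classical.dec _

/-- the `σ`-shuffled tuple `c₀ ⊗ x_{σ(1)}… / y_{σ(1)-p}…` with head `c₀` entering the
shuffle product `(x₀ ⊗ ⋯ ⊗ x_p) × (y₀ ⊗ ⋯ ⊗ y_q)`; the entries `x₁,…,x_p,y₁,…,y_q`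
are distributed according to `σ`. -/
def shufT {α : Type*} (p q : ℕ) (c0 : α) (x : Fin (p+1) → α) (y : Fin (q+1) → α)
    (σ : Equiv.Perm (Fin (p+q))) : Fin (p+q+1) → α := fun j =>
  Fin.cases c0 (fun i =>
    if hlt : (σ i).1 < p then x ⟨(σ i).1 + 1, by omega⟩
    else y ⟨(σ i).1 - p + 1, by have := (σ i).2; omega⟩) j

/-- the graded Hochschild boundary of a pure tensor `v` with degree data `d`:
`b(v₀⊗⋯⊗v_N) = Σ_{j<N} (-1)^j v₀⊗⋯⊗v_jv_{j+1}⊗⋯ +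
 (-1)^N (-1)^{deg v_N (deg v₀+⋯+deg v_{N-1})} v_Nv₀⊗v₁⊗⋯⊗v_{N-1}`. -/
def bPure (K : Type*) [CommRing K] (A : Type*) [Ring A] [Algebra K A] {N : ℕ}
    (v : Fin (N+1) → A) (d : Fin (N+1) → ℤ) :
    PiTensorProduct K (fun _ : Fin N => A) :=
  (∑ j : Fin N, (-1:K)^(j.1) • PiTensorProduct.tprod K (mergeW (· * ·) v j))
  + ((-1:K)^N * negOnePowK K (d (Fin.last N) * ∑ j : Fin N, d j.castSucc)) •
      PiTensorProduct.tprod K (rotW (· * ·) v)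

/-- the shuffle product of the homogeneous pure chains `x` (degrees `dx`) and `y`
(degrees `dy`):
`x × y = (-1)^{deg y₀ (deg x₁+⋯+deg x_p)} Σ_{(p,q)-shuffles σ} sgn(σ) (x₀y₀) ⊗ (shuffled)`,
realized inside the tensor power of length `N = p+q+1`. -/
def shufProd (K : Type*) [CommRing K] (A : Type*) [Ring A] [Algebra K A]
    (p q N : ℕ) (hN : N = p + q + 1)
    (x : Fin (p+1) → A) (dx : Fin (p+1) → ℤ) (y : Fin (q+1) → A) (dy : Fin (q+1) → ℤ) :
    PiTensorProduct K (fun _ : Fin N => A) :=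
  negOnePowK K (dy 0 * ∑ j : Fin p, dx j.succ) •
    ∑ σ : Equiv.Perm (Fin (p+q)),
      if IsShuffle p q σ then
        (((Equiv.Perm.sign σ : ℤˣ) : ℤ) : K) •
          PiTensorProduct.tprod K
            (fun j : Fin N => shufT p q (x 0 * y 0) x y σ (Fin.cast (by omega) j))
      else 0

/-- `(ω)_k = 1 ⊗ ω ⊗ ⋯ ⊗ ω` (k copies of ω). -/
def omegaT {A : Type*} [One A] (ω : A) (k : ℕ) : Fin (k+1) → A :=
  fun j => if j.1 = 0 then 1 else ω

/-- the degrees of `(ω)_k` (ω has degree 1, the unit degree 0). -/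
def omegaD (k : ℕ) : Fin (k+1) → ℤ := fun j => if j.1 = 0 then 0 else 1

/-! The cyclic term of `b((ω)_{k+1})` cancels its first face, and the remaining faces put `ω²`
into one ω-slot each. On the other side `∇1 = 0`, so `∇((ω)_k)` puts `∇ω` into one ω-slot
each, with the opposite sign. The Maurer–Cartan equation gives `ℏ(Ω - R̃ - ∇ω) = ω²`, so the
two sides agree slot by slot. -/

lemma negOnePowK_natCast (K : Type*) [CommRing K] (n : ℕ) :
    negOnePowK K (n : ℤ) = (-1 : K) ^ n := by
  simp [negOnePowK, Int.negOnePow_def]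

def nablaPure (K : Type*) [CommRing K] {A : Type*} [AddCommMonoid A] [Module K A]
    (nabla : A →ₗ[K] A) {N : ℕ} (v : Fin (N+1) → A) (d : Fin (N+1) → ℤ) :
    PiTensorProduct K (fun _ : Fin (N+1) => A) :=
  ∑ i : Fin (N+1), negOnePowK K (∑ j : Fin (N+1), if j < i then d j else 0) •
    PiTensorProduct.tprod K (Function.update v i (nabla (v i)))

section omegaT

variable {A : Type*} (ω : A)

@[simp]
lemma omegaT_zero [One A] (k : ℕ) : omegaT ω k 0 = 1 := rfl

@[simp]
lemma omegaT_succ [One A] {k : ℕ} (j : Fin k) : omegaT ω k j.succ = ω := rfl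

lemma mergeW_omegaT_succ [One A] [Mul A] {k : ℕ} (j : Fin k) :
    mergeW (· * ·) (omegaT ω (k+1)) j.succ = Function.update (omegaT ω k) j.succ (ω * ω) := by
  funext l
  rcases lt_trichotomy l.1 (j.1 + 1) with h | h | h
  · rw [Function.update_of_ne (Fin.ne_of_val_ne (by simp; omega))]
    simp [mergeW, omegaT, h]
  · obtain rfl : l = j.succ := Fin.ext h
    simp [mergeW, omegaT]
  · rw [Function.update_of_ne (Fin.ne_of_val_ne (by simp; omega))]
    have hl : l ≠ 0 := by rintro rfl; simp at h
    simp [mergeW, omegaT, h.ne', hl]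

lemma mergeW_omegaT_zero [MulOneClass A] (k : ℕ) :
    mergeW (· * ·) (omegaT ω (k+1)) 0 = rotW (· * ·) (omegaT ω (k+1)) := by
  funext l
  by_cases h : l.1 = 0 <;> simp [mergeW, rotW, omegaT, h]

@[simp]
lemma omegaD_zero (k : ℕ) : omegaD k 0 = 0 := rfl

@[simp]
lemma omegaD_succ {k : ℕ} (j : Fin k) : omegaD k j.succ = 1 := rfl

lemma sum_omegaD_lt_succ {k : ℕ} (j : Fin k) :
    (∑ l : Fin (k+1), if l < j.succ then omegaD k l else 0) = j.1 := by
  simp [Fin.sum_univ_succ, Finset.sum_boole, Finset.filter_gt_eq_Iio]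

end omegaT

section ring

variable (K : Type*) [CommRing K] {A : Type*} [Ring A] [Algebra K A] (ω : A)

lemma bPure_omegaT (k : ℕ) :
    bPure K A (omegaT ω (k+1)) (omegaD (k+1)) =
      ∑ j : Fin k, (-1 : K) ^ (j.1 + 1) •
        PiTensorProduct.tprod K (Function.update (omegaT ω k) j.succ (ω * ω)) := by
  have hdeg : negOnePowK K (omegaD (k+1) (Fin.last (k+1)) *
      ∑ j : Fin (k+1), omegaD (k+1) j.castSucc) = (-1 : K) ^ k := by
    rw [← negOnePowK_natCast, ← Fin.succ_last, omegaD_succ, one_mul, Fin.sum_univ_succ]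
    simp
  have hsign : (-1 : K) ^ (k + 1) * (-1) ^ k = -1 := by
    rw [← pow_add, (by omega : k + 1 + k = 2 * k + 1), pow_succ, pow_mul]
    norm_num
  rw [bPure, hdeg, hsign, Fin.sum_univ_succ, mergeW_omegaT_zero]
  simp only [mergeW_omegaT_succ, Fin.val_zero, pow_zero, one_smul, neg_one_smul, Fin.val_succ]
  abel

lemma nablaPure_omegaT {nabla : A →ₗ[K] A} (hone : nabla 1 = 0) (k : ℕ) :
    nablaPure K nabla (omegaT ω k) (omegaD k) =
      ∑ j : Fin k, (-1 : K) ^ j.1 •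
        PiTensorProduct.tprod K (Function.update (omegaT ω k) j.succ (nabla ω)) := by
  rw [nablaPure, Fin.sum_univ_succ, omegaT_zero, hone, MultilinearMap.map_update_zero,
    smul_zero, zero_add]
  simp only [sum_omegaD_lt_succ, negOnePowK_natCast, omegaT_succ]

end ring

/-- With `∇ω + ω²/ℏ = Ω - R̃` as in the generalized Maurer–Cartan
setting: `b((ω)₀) = 0` (trivially, as the degree-0 differential lands in `C₋₁ = 0`),
and for every `k ≥ 1`:
`b((ω)_k) = ℏ ∇((ω)_{k-1}) + ℏ Σ_{j=1}^{k-1} (-1)^j 1⊗ω⊗⋯⊗(Ω-R̃)⊗⋯⊗ω`,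
where `Ω - R̃` occupies the `j`-th ω-slot and `∇` acts on tensors by the graded
Leibniz rule. -/
theorem b_omega_powers
    (K : Type*) [CommRing K] (A : Type*) [Ring A] [Algebra K A]
    (𝒜 : ℤ → Submodule K A) [GradedRing 𝒜]
    (hbar hbarInv : K) (hunit : hbar * hbarInv = 1)
    (nabla : A →ₗ[K] A)
    (hleibniz : ∀ (dx : ℤ) (x y : A), x ∈ 𝒜 dx →
      nabla (x * y) = nabla x * y + negOnePowK K dx • (x * nabla y))
    (ω : A) (Rt : A) (Om : A)
    (hMC : nabla ω + hbarInv • (ω * ω) = Om - Rt) :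
    (∀ f : PiTensorProduct K (fun _ : Fin 1 => A) →ₗ[K] (⊥ : Submodule K A),
        f (PiTensorProduct.tprod K (omegaT ω 0)) = 0)
    ∧ ∀ k : ℕ,
        bPure K A (omegaT ω (k+1)) (omegaD (k+1)) =
          hbar •
            ((∑ i : Fin (k+1),
                negOnePowK K (∑ j : Fin (k+1), if j < i then omegaD k j else 0) •
                  PiTensorProduct.tprod K
                    (Function.update (omegaT ω k) i (nabla (omegaT ω k i))))
              + ∑ j : Fin k, (-1:K)^(j.1+1) •
                  PiTensorProduct.tprod K
                    (Function.update (omegaT ω k)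
                      (⟨j.1+1, by have := j.2; omega⟩ : Fin (k+1)) (Om - Rt))) := by
  refine ⟨fun f => Subtype.ext ((Submodule.mem_bot K).mp (f _).2), fun k => ?_⟩
  have hone : nabla 1 = 0 := by
    simpa [negOnePowK] using hleibniz 0 1 1 (SetLike.one_mem_graded 𝒜)
  have hcurv : hbar • (Om - Rt - nabla ω) = ω * ω := by
    rw [← hMC, add_sub_cancel_left, smul_smul, hunit, one_smul]
  rw [bPure_omegaT, ← nablaPure, nablaPure_omegaT K ω hone, smul_add, Finset.smul_sum,
    Finset.smul_sum, ← Finset.sum_add_distrib]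
  refine Finset.sum_congr rfl fun j _ => ?_
  change _ = _ + hbar • (-1 : K) ^ (j.1 + 1) •
    PiTensorProduct.tprod K (Function.update (omegaT ω k) j.succ (Om - Rt))
  rw [← hcurv, MultilinearMap.map_update_smul, MultilinearMap.map_update_sub, pow_succ]
  module
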